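/- arXiv:0912.3104 — 2 statements merged into one kernel-verified Lean document; each statement's English description precedes it below -/
import Mathlib

section
/- Let α, λ, μ be rational numbers, let s assign a rational number s_I to each 4-element subset I of {1,…,7}, and let p_1,…,p_7 be rationals. If (s,p) is F-nef with parameters (α,λ,μ), then for every 2-element subset {i,j} of {1,…,7}: c_{ij} ≥ 0, where c_{ij} = (1/3)·∑_{I ⊇ {i,j}} s_I + (α+λ)(p_i + p_j) + λ·∑_{k∉{i,j}} p_k (the sum over I ranging over 4-element subsets of {1,…,7}). -/
open Finset

/-- `(s, p)` is F-nef with parameters `(a, l, m)` (`α`, `λ`, `μ`): the value of the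
divisor `D = ∑ s_I S_I + ∑ p_i P_i` on every F-curve of `M̄_{0,7}` is nonnegative,
for the three combinatorial types `(1:1:1:4)`, `(1:1:2:3)`, `(1:2:2:2)` of partitions
`(A,B,C,D)` of the marked points. -/
def FNef (a l m : ℚ) (s : Finset (Fin 7) → ℚ) (p : Fin 7 → ℚ) : Prop :=
  ∀ A B C D : Finset (Fin 7),
    Disjoint A B → Disjoint A C → Disjoint A D →
    Disjoint B C → Disjoint B D → Disjoint C D →
    A ∪ B ∪ C ∪ D = univ →
    A.Nonempty → B.Nonempty → C.Nonempty → D.Nonempty →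
    ((A.card = 1 ∧ B.card = 1 ∧ C.card = 1 ∧ D.card = 4 →
        0 ≤ (∑ I ∈ univ.filter (fun I : Finset (Fin 7) => I.card = 4 ∧
                (I ∩ A).card = 1 ∧ (I ∩ B).card = 1 ∧ (I ∩ C).card = 1 ∧ (I ∩ D).card = 1),
              s I)
            + (2*a + 3*l - m) * (∑ i ∈ A ∪ B ∪ C, p i)
            + (3*l - m) * (∑ j ∈ D, p j)) ∧
     (A.card = 1 ∧ B.card = 1 ∧ C.card = 2 ∧ D.card = 3 →
        0 ≤ (∑ I ∈ univ.filter (fun I : Finset (Fin 7) => I.card = 4 ∧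
                (I ∩ A).card = 1 ∧ (I ∩ B).card = 1 ∧ (I ∩ C).card = 1 ∧ (I ∩ D).card = 1),
              s I)
            + (a + m) * (∑ i ∈ A ∪ B, p i)
            + (-a + m) * (∑ j ∈ C, p j)
            + m * (∑ k ∈ D, p k)) ∧
     (A.card = 1 ∧ B.card = 2 ∧ C.card = 2 ∧ D.card = 2 →
        0 ≤ (∑ I ∈ univ.filter (fun I : Finset (Fin 7) => I.card = 4 ∧
                (I ∩ A).card = 1 ∧ (I ∩ B).card = 1 ∧ (I ∩ C).card = 1 ∧ (I ∩ D).card = 1),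
              s I)
            + 3*(m - l) * (∑ i ∈ A, p i)
            + (-a + 3*(m - l)) * (∑ j ∈ B ∪ C ∪ D, p j)))

/-- The coefficient `c_J` of the boundary divisor `Δ_J` in the obvious representative of
`D = ∑ s_I S_I + ∑ p_i P_i`, for `J` of cardinality 2 or 3. -/
def cJ (a l m : ℚ) (s : Finset (Fin 7) → ℚ) (p : Fin 7 → ℚ) (J : Finset (Fin 7)) : ℚ :=
  if J.card = 2 then
    (1/3) * (∑ I ∈ univ.filter (fun I : Finset (Fin 7) => I.card = 4 ∧ J ⊆ I), s I)
      + (a + l) * (∑ i ∈ J, p i) + l * (∑ k ∈ Jᶜ, p k)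
  else
    (1/3) * (∑ I ∈ univ.filter (fun I : Finset (Fin 7) => I.card = 4 ∧ (I ∩ J).card = 2), s I)
      + m * (∑ k, p k)

/-!
Fix `J = {i, j}` and its complement `K`, a set of five points. Add up the `(1,1,1,4)`
inequalities for the partitions `({i}, {j}, {k}, ·)` with `k ∈ K`, each taken twice, and the
`(1,1,2,3)` inequalities for `({i}, {j}, e, ·)` with `e` a pair in `K`. A 4-set `I ⊇ J` meets
`K` in two points, so it is transversal to two partitions of the first kind and to `2 · 3` of
the second: every `s_I` with `I ⊇ J` appears `2 · 2 + 6 = 10` times. The `p`-terms add up in the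
same way, and the sum is exactly `30 c_{ij}`.
-/

section Counting
variable {α : Type*} [DecidableEq α]

theorem sum_sum_ite_eq_sum_card_filter_smul {ι κ M : Type*} [AddCommMonoid M] (E : Finset ι)
    (F : Finset κ) (P : ι → κ → Prop) [∀ e I, Decidable (P e I)] (g : κ → M) :
    ∑ e ∈ E, ∑ I ∈ F, (if P e I then g I else 0) = ∑ I ∈ F, #{e ∈ E | P e I} • g I := by
  rw [sum_comm]
  exact sum_congr rfl fun I _ => by rw [← sum_filter, sum_const]

theorem sum_powersetCard_succ_sum {β : Type*} [AddCommMonoid β] (n : ℕ) (K : Finset α)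
    (f : α → β) :
    ∑ e ∈ K.powersetCard (n + 1), ∑ x ∈ e, f x = (#K - 1).choose n • ∑ x ∈ K, f x := by
  rw [sum_comm' (t' := K) (s' := fun x => {e ∈ K.powersetCard (n + 1) | {x} ⊆ e}), smul_sum]
  · refine sum_congr rfl fun x hx => ?_
    rw [sum_const, card_filter_powersetCard_subset _ _ _ (by simpa) (by simp), card_singleton,
      Nat.add_sub_cancel]
  · intro e x
    simp only [mem_powersetCard, mem_filter, singleton_subset_iff]
    exact ⟨fun ⟨⟨hK, he⟩, hx⟩ => ⟨⟨⟨hK, he⟩, hx⟩, hK hx⟩, fun ⟨h, _⟩ => ⟨h.1, h.2⟩⟩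

theorem card_filter_powersetCard_two_card_inter_eq_one (K I : Finset α) :
    #{e ∈ K.powersetCard 2 | #(I ∩ e) = 1} = #(K ∩ I) * #(K \ I) := by
  rw [← card_product]
  refine (card_bij (fun xy _ => {xy.1, xy.2}) ?_ ?_ ?_).symm
  · rintro ⟨x, y⟩ hxy
    simp only [mem_product, mem_inter, mem_sdiff] at hxy
    have hne : x ≠ y := fun h => hxy.2.2 (h ▸ hxy.1.2)
    have : I ∩ {x, y} = {x} := by grind
    simp [mem_powersetCard, insert_subset_iff, card_pair hne, this, hxy.1.1, hxy.2.1]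
  · rintro ⟨x, y⟩ hxy ⟨x', y'⟩ hxy' h
    simp only [mem_product, mem_inter, mem_sdiff] at hxy hxy'
    have hx : x ∈ ({x', y'} : Finset α) := h ▸ mem_insert_self x {y}
    have hy : y ∈ ({x', y'} : Finset α) := h ▸ mem_insert_of_mem (mem_singleton_self y)
    simp only [mem_insert, mem_singleton] at hx hy
    grind
  · intro e he
    simp only [mem_filter, mem_powersetCard] at he
    obtain ⟨⟨heK, he2⟩, hI⟩ := he
    obtain ⟨x, hx⟩ := card_eq_one.mp hI
    obtain ⟨y, hy⟩ := card_eq_one.mp (show #(e \ I) = 1 by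
      rw [card_sdiff, hI, he2])
    have hxe : x ∈ e ∩ I := by simp [inter_comm, hx]
    have hye : y ∈ e \ I := by simp [hy]
    refine ⟨(x, y), ?_, ?_⟩
    · simp only [mem_product, mem_inter, mem_sdiff] at hxe hye ⊢
      exact ⟨⟨heK hxe.1, hxe.2⟩, heK hye.1, hye.2⟩
    · rw [← sdiff_union_inter e I, inter_comm, hx, hy]
      exact pair_comm x y

theorem card_inter_singleton_eq_one (I : Finset α) (x : α) : #(I ∩ {x}) = 1 ↔ x ∈ I := by
  by_cases h : x ∈ I <;> simp [h]

theorem card_inter_add_of_partition [Fintype α] {A B C D : Finset α} (hAB : Disjoint A B)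
    (hAC : Disjoint A C) (hAD : Disjoint A D) (hBC : Disjoint B C) (hBD : Disjoint B D)
    (hCD : Disjoint C D) (hU : A ∪ B ∪ C ∪ D = univ) (I : Finset α) :
    #(I ∩ A) + #(I ∩ B) + #(I ∩ C) + #(I ∩ D) = #I := by
  conv_rhs => rw [← inter_univ I, ← hU]
  simp only [inter_union_distrib_left]
  rw [card_union_of_disjoint, card_union_of_disjoint, card_union_of_disjoint]
  all_goals
    try simp only [disjoint_union_left]
    try and_intros
    all_goals exact Disjoint.mono inter_subset_right inter_subset_right ‹_›

end Counting

namespace FNef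
variable {a l m : ℚ} {s : Finset (Fin 7) → ℚ} {p : Fin 7 → ℚ}

theorem nonneg_1114 (hF : FNef a l m s p) {i j k : Fin 7} (hij : i ≠ j)
    (hk : k ∈ ({i, j} : Finset (Fin 7))ᶜ) :
    0 ≤ ∑ I ∈ univ.filter (fun I : Finset (Fin 7) => #I = 4 ∧ {i, j} ⊆ I),
          (if k ∈ I then s I else 0)
      + 2 * a * (p i + p j + p k) + (3 * l - m) * ∑ x, p x := by
  simp only [mem_compl, mem_insert, mem_singleton, not_or] at hk
  set D : Finset (Fin 7) := {i, j, k}ᶜ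
  have hAB : Disjoint {i} {j} := disjoint_singleton.2 hij
  have hAC : Disjoint {i} {k} := disjoint_singleton.2 (Ne.symm hk.1)
  have hBC : Disjoint {j} {k} := disjoint_singleton.2 (Ne.symm hk.2)
  have hAD : Disjoint {i} D := by simp [D]
  have hBD : Disjoint {j} D := by simp [D]
  have hCD : Disjoint {k} D := by simp [D]
  have hU : {i} ∪ {j} ∪ {k} ∪ D = univ := by
    ext x
    simp only [D, mem_union, mem_singleton, mem_compl, mem_insert, mem_univ, iff_true]
    tauto
  have hD : #D = 4 := by
    rw [card_compl, card_insert_of_notMem (by simp [hij, Ne.symm hk.1]),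
      card_pair (Ne.symm hk.2), Fintype.card_fin]
  have h := (hF {i} {j} {k} D hAB hAC hAD hBC hBD hCD hU (singleton_nonempty i)
    (singleton_nonempty j) (singleton_nonempty k) (card_pos.1 (by omega))).1
    ⟨card_singleton i, card_singleton j, card_singleton k, hD⟩
  have hfilter : ∑ I ∈ univ.filter (fun I : Finset (Fin 7) => #I = 4 ∧
        #(I ∩ {i}) = 1 ∧ #(I ∩ {j}) = 1 ∧ #(I ∩ {k}) = 1 ∧ #(I ∩ D) = 1), s I
      = ∑ I ∈ univ.filter (fun I : Finset (Fin 7) => #I = 4 ∧ {i, j} ⊆ I),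
          (if k ∈ I then s I else 0) := by
    rw [sum_ite, sum_const_zero, add_zero, filter_filter]
    refine sum_congr (filter_congr fun I _ => ?_) fun _ _ => rfl
    have hcard := card_inter_add_of_partition hAB hAC hAD hBC hBD hCD hU I
    simp only [card_inter_singleton_eq_one, insert_subset_iff, singleton_subset_iff]
    constructor
    · rintro ⟨h4, hi, hj, hk, -⟩
      exact ⟨⟨h4, hi, hj⟩, hk⟩
    · rintro ⟨⟨h4, hi, hj⟩, hk⟩
      simp only [inter_singleton_of_mem, hi, hj, hk, card_singleton] at hcard
      exact ⟨h4, hi, hj, hk, by omega⟩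
  have hpD : ∑ x ∈ D, p x = ∑ x, p x - (p i + p j + p k) := by
    rw [eq_sub_iff_add_eq, ← sum_compl_add_sum {i, j, k},
      sum_insert (by simp [hij, Ne.symm hk.1]), sum_pair (Ne.symm hk.2), add_assoc]
  have hpABC : ∑ x ∈ {i} ∪ {j} ∪ {k}, p x = p i + p j + p k := by
    rw [sum_union (disjoint_union_left.2 ⟨hAC, hBC⟩), sum_union hAB]
    simp only [sum_singleton]
  rw [hfilter, hpABC, hpD] at h
  linarith

theorem nonneg_1123 (hF : FNef a l m s p) {i j : Fin 7} (hij : i ≠ j) {e : Finset (Fin 7)}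
    (he : e ∈ ({i, j} : Finset (Fin 7))ᶜ.powersetCard 2) :
    0 ≤ ∑ I ∈ univ.filter (fun I : Finset (Fin 7) => #I = 4 ∧ {i, j} ⊆ I),
          (if #(I ∩ e) = 1 then s I else 0)
      + a * (p i + p j) - a * ∑ x ∈ e, p x + m * ∑ x, p x := by
  obtain ⟨heJ, he2⟩ := mem_powersetCard.1 he
  have hJe : Disjoint {i, j} e := subset_compl_iff_disjoint_left.1 heJ
  set D : Finset (Fin 7) := ({i, j} ∪ e)ᶜ
  have hAB : Disjoint {i} {j} := disjoint_singleton.2 hij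
  have hAC : Disjoint {i} e := hJe.mono_left (by simp)
  have hBC : Disjoint {j} e := hJe.mono_left (by simp)
  have hAD : Disjoint {i} D := by simp [D]
  have hBD : Disjoint {j} D := by simp [D]
  have hCD : Disjoint e D := disjoint_compl_right.mono_left subset_union_right
  have hij' : ({i} ∪ {j} : Finset (Fin 7)) = {i, j} := (insert_eq i {j}).symm
  have hU : {i} ∪ {j} ∪ e ∪ D = univ := by rw [hij', union_compl]
  have hD : #D = 3 := by
    rw [card_compl, card_union_of_disjoint hJe, card_pair hij, he2, Fintype.card_fin]
  have h := (hF {i} {j} e D hAB hAC hAD hBC hBD hCD hU (singleton_nonempty i)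
    (singleton_nonempty j) (card_pos.1 (by omega)) (card_pos.1 (by omega))).2.1
    ⟨card_singleton i, card_singleton j, he2, hD⟩
  have hfilter : ∑ I ∈ univ.filter (fun I : Finset (Fin 7) => #I = 4 ∧
        #(I ∩ {i}) = 1 ∧ #(I ∩ {j}) = 1 ∧ #(I ∩ e) = 1 ∧ #(I ∩ D) = 1), s I
      = ∑ I ∈ univ.filter (fun I : Finset (Fin 7) => #I = 4 ∧ {i, j} ⊆ I),
          (if #(I ∩ e) = 1 then s I else 0) := by
    rw [sum_ite, sum_const_zero, add_zero, filter_filter]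
    refine sum_congr (filter_congr fun I _ => ?_) fun _ _ => rfl
    have hcard := card_inter_add_of_partition hAB hAC hAD hBC hBD hCD hU I
    simp only [card_inter_singleton_eq_one, insert_subset_iff, singleton_subset_iff]
    constructor
    · rintro ⟨h4, hi, hj, he1, -⟩
      exact ⟨⟨h4, hi, hj⟩, he1⟩
    · rintro ⟨⟨h4, hi, hj⟩, he1⟩
      simp only [inter_singleton_of_mem, hi, hj, card_singleton] at hcard
      exact ⟨h4, hi, hj, he1, by omega⟩
  have hpD : ∑ x ∈ D, p x = ∑ x, p x - (p i + p j + ∑ x ∈ e, p x) := by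
    rw [eq_sub_iff_add_eq, ← sum_compl_add_sum ({i, j} ∪ e), sum_union hJe, sum_pair hij]
  rw [hfilter, hij', sum_pair hij, hpD] at h
  linarith

end FNef

theorem thirty_mul_cJ_pair (a l m : ℚ) (s : Finset (Fin 7) → ℚ) (p : Fin 7 → ℚ) {i j : Fin 7}
    (hij : i ≠ j) :
    30 * cJ a l m s p {i, j} =
      2 * ∑ k ∈ ({i, j} : Finset (Fin 7))ᶜ,
        (∑ I ∈ univ.filter (fun I : Finset (Fin 7) => #I = 4 ∧ {i, j} ⊆ I),
            (if k ∈ I then s I else 0)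
          + 2 * a * (p i + p j + p k) + (3 * l - m) * ∑ x, p x)
      + ∑ e ∈ ({i, j} : Finset (Fin 7))ᶜ.powersetCard 2,
        (∑ I ∈ univ.filter (fun I : Finset (Fin 7) => #I = 4 ∧ {i, j} ⊆ I),
            (if #(I ∩ e) = 1 then s I else 0)
          + a * (p i + p j) - a * ∑ x ∈ e, p x + m * ∑ x, p x) := by
  rw [cJ, if_pos (card_pair hij)]
  set J : Finset (Fin 7) := {i, j}
  set F := univ.filter (fun I : Finset (Fin 7) => #I = 4 ∧ J ⊆ I)
  have hJ : #J = 2 := card_pair hij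
  have hK : #Jᶜ = 5 := by rw [card_compl, hJ, Fintype.card_fin]
  have hmult : ∀ I ∈ F,
      2 * #{k ∈ Jᶜ | k ∈ I} + #{e ∈ Jᶜ.powersetCard 2 | #(I ∩ e) = 1} = 10 := by
    intro I hI
    obtain ⟨hI4, hJI⟩ := (mem_filter.1 hI).2
    have hin : #(Jᶜ ∩ I) = 2 := by
      rw [inter_comm, ← sdiff_eq_inter_compl, card_sdiff_of_subset hJI, hI4, hJ]
    have hout : #(Jᶜ \ I) = 3 := by
      rw [sdiff_eq_inter_compl, ← compl_union, union_eq_right.2 hJI, card_compl, hI4,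
        Fintype.card_fin]
    rw [filter_mem_eq_inter, card_filter_powersetCard_two_card_inter_eq_one, hin, hout]
  have hs : 2 * ∑ I ∈ F, #{k ∈ Jᶜ | k ∈ I} • s I
      + ∑ I ∈ F, #{e ∈ Jᶜ.powersetCard 2 | #(I ∩ e) = 1} • s I = 10 * ∑ I ∈ F, s I := by
    rw [mul_sum, mul_sum, ← sum_add_distrib]
    refine sum_congr rfl fun I hI => ?_
    rw [nsmul_eq_mul, nsmul_eq_mul, ← mul_assoc, ← add_mul, ← Nat.cast_ofNat, ← Nat.cast_mul,
      ← Nat.cast_add, hmult I hI]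
    norm_num
  have hpK : ∑ x ∈ Jᶜ, p x = ∑ x, p x - (p i + p j) := by
    rw [eq_sub_iff_add_eq, ← sum_compl_add_sum J, sum_pair hij]
  have hpairs := sum_powersetCard_succ_sum 1 Jᶜ p
  rw [hK] at hpairs
  simp only [sum_add_distrib, sum_sub_distrib, ← mul_sum, sum_const, card_powersetCard, hK,
    sum_sum_ite_eq_sum_card_filter_smul, hpairs, hpK, nsmul_eq_mul] at hs ⊢
  rw [sum_pair hij, show Nat.choose 5 2 = 10 by rfl, show Nat.choose (5 - 1) 1 = 4 by rfl]
  push_cast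
  linarith

/-- For any parameters, every F-nef divisor on `M̄_{0,7}` has nonnegative coefficients on
all boundary divisors `Δ_{ij}`. -/
theorem stmt6 (a l m : ℚ) (s : Finset (Fin 7) → ℚ) (p : Fin 7 → ℚ)
    (hF : FNef a l m s p) (i j : Fin 7) (hij : i ≠ j) :
    0 ≤ cJ a l m s p {i, j} := by
  have htriples := sum_nonneg fun k hk => hF.nonneg_1114 hij hk
  have hpairs := sum_nonneg fun e he => hF.nonneg_1123 hij he
  linarith [thirty_mul_cJ_pair a l m s p hij]
end

section
/- Let α, λ, μ be rational numbers, let s assign a rational number s_I to each 4-element subset I of {1,…,7}, and let p_1,…,p_7 be rationals. If (s,p) is F-nef with parameters (α,λ,μ), then for every 3-element subset J of {1,…,7}: 12·c_J − 4α·∑_{i∈J} p_i + 3α·∑_{j∉J} p_j ≥ 0, where c_J = (1/3)·∑_{|I∩J|=2} s_I + μ·(p_1 + ⋯ + p_7) (the sum over I ranging over 4-element subsets of {1,…,7}). -/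
open Finset

/-! Sum the `(1:1:2:3)` inequality over the twelve partitions `({x}, {b}, J \ {x}, Jᶜ \ {b})`
with `x ∈ J`, `b ∉ J`. A 4-set is transversal to such a partition exactly when it meets `J` in
two points, `x` and `b` among them, so every `I` with `|I ∩ J| = 2` is counted `2 · 2 = 4` times
and the `s`-part of the sum is `4 ∑_{|I ∩ J| = 2} s_I = 12 (c_J - μ ∑ p)`; the `p`-parts collect
to `12 μ ∑ p - 4α ∑_J p + 3α ∑_{Jᶜ} p`. -/

section
variable {α : Type*} [DecidableEq α]

theorem card_inter_singleton_eq_one_iff (I : Finset α) (y : α) : #(I ∩ {y}) = 1 ↔ y ∈ I := by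
  by_cases h : y ∈ I <;> simp [h]

theorem card_inter_erase_add_one {I J : Finset α} {x : α} (hxI : x ∈ I) (hxJ : x ∈ J) :
    #(I ∩ J.erase x) + 1 = #(I ∩ J) := by
  rw [inter_erase, card_erase_add_one (mem_inter.2 ⟨hxI, hxJ⟩)]

theorem card_inter_add_card_inter_compl [Fintype α] (I J : Finset α) :
    #(I ∩ J) + #(I ∩ Jᶜ) = #I := by
  rw [← sdiff_eq_inter_compl, card_inter_add_card_sdiff]

theorem transversal_singleton_singleton_erase_erase_iff [Fintype α] {I J : Finset α} {x b : α}
    (hx : x ∈ J) (hb : b ∉ J) :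
    (#I = 4 ∧ #(I ∩ {x}) = 1 ∧ #(I ∩ {b}) = 1 ∧ #(I ∩ J.erase x) = 1 ∧ #(I ∩ Jᶜ.erase b) = 1)
      ↔ (#I = 4 ∧ #(I ∩ J) = 2) ∧ x ∈ I ∧ b ∈ I := by
  simp only [card_inter_singleton_eq_one_iff]
  have hbc : b ∈ Jᶜ := mem_compl.2 hb
  have hsplit := card_inter_add_card_inter_compl I J
  constructor
  · rintro ⟨h4, hxI, hbI, hJx, -⟩
    have := card_inter_erase_add_one hxI hx
    exact ⟨⟨h4, by omega⟩, hxI, hbI⟩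
  · rintro ⟨⟨h4, h2⟩, hxI, hbI⟩
    have := card_inter_erase_add_one hxI hx
    have := card_inter_erase_add_one hbI hbc
    exact ⟨h4, hxI, hbI, by omega, by omega⟩

theorem sum_sum_sum_filter_mem_and_mem {β : Type*} [AddCommMonoid β] (X Y : Finset α)
    (F : Finset (Finset α)) (f : Finset α → β) :
    ∑ x ∈ X, ∑ y ∈ Y, ∑ I ∈ F with x ∈ I ∧ y ∈ I, f I
      = ∑ I ∈ F, (#(X ∩ I) * #(Y ∩ I)) • f I := by
  simp_rw [sum_filter, ite_and]
  calc _ = ∑ x ∈ X, ∑ I ∈ F, ∑ y ∈ Y, if x ∈ I then (if y ∈ I then f I else 0) else 0 :=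
        sum_congr rfl fun _ _ => sum_comm
    _ = ∑ I ∈ F, ∑ x ∈ X, ∑ y ∈ Y, if x ∈ I then (if y ∈ I then f I else 0) else 0 := sum_comm
    _ = _ := sum_congr rfl fun I _ => by
        simp only [sum_ite_irrel, sum_ite_mem, sum_const, smul_zero, smul_smul]

end

theorem FNef.nonneg_of_mem_of_notMem {a l m : ℚ} {s : Finset (Fin 7) → ℚ} {p : Fin 7 → ℚ}
    (hF : FNef a l m s p) {J : Finset (Fin 7)} (hJ : #J = 3) {x b : Fin 7}
    (hx : x ∈ J) (hb : b ∉ J) :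
    0 ≤ ∑ I ∈ univ.filter (fun I : Finset (Fin 7) => #I = 4 ∧ #(I ∩ J) = 2) with x ∈ I ∧ b ∈ I,
          s I
        + (a + m) * (p x + p b) + (-a + m) * ∑ j ∈ J.erase x, p j
        + m * ∑ k ∈ Jᶜ.erase b, p k := by
  have hxb : x ≠ b := by rintro rfl; exact hb hx
  have hC : #(J.erase x) = 2 := by rw [card_erase_of_mem hx, hJ]
  have hD : #(Jᶜ.erase b) = 3 := by rw [card_erase_of_mem (mem_compl.2 hb), card_compl, hJ]; rfl
  have H := (hF {x} {b} (J.erase x) (Jᶜ.erase b) (disjoint_singleton.2 hxb)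
    (disjoint_singleton_left.2 (notMem_erase x J))
    (disjoint_singleton_left.2 fun h => mem_compl.1 (mem_of_mem_erase h) hx)
    (disjoint_singleton_left.2 fun h => hb (mem_of_mem_erase h))
    (disjoint_singleton_left.2 (notMem_erase b _))
    (disjoint_compl_right.mono (erase_subset _ _) (erase_subset _ _))
    (by ext y; simp only [mem_union, mem_singleton, mem_erase, mem_compl, mem_univ, iff_true]; tauto)
    (singleton_nonempty x) (singleton_nonempty b)
    (card_pos.1 (by omega)) (card_pos.1 (by omega))).2.1 ⟨rfl, rfl, hC, hD⟩
  rw [filter_filter]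
  rwa [filter_congr fun I _ => transversal_singleton_singleton_erase_erase_iff hx hb,
    show ({x} ∪ {b} : Finset (Fin 7)) = {x, b} from rfl, sum_pair hxb] at H

/-- Summing the F-inequalities over the twelve F-curves of type `(1:1:2:3)` whose spine
tails of sizes 1 and 2 carry the labels of `J` gives
`12 c_J − 4α ∑_{i∈J} p_i + 3α ∑_{j∉J} p_j ≥ 0`. -/
theorem stmt7 (a l m : ℚ) (s : Finset (Fin 7) → ℚ) (p : Fin 7 → ℚ)
    (hF : FNef a l m s p) (J : Finset (Fin 7)) (hJ : J.card = 3) :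
    0 ≤ 12 * cJ a l m s p J
        - 4*a * (∑ i ∈ J, p i)
        + 3*a * (∑ j ∈ Jᶜ, p j) := by
  set F := univ.filter (fun I : Finset (Fin 7) => #I = 4 ∧ #(I ∩ J) = 2)
  have hK : #Jᶜ = 4 := by rw [card_compl, hJ]; rfl
  have hcJ : cJ a l m s p J = (1/3) * ∑ I ∈ F, s I + m * (∑ i ∈ J, p i + ∑ j ∈ Jᶜ, p j) := by
    rw [cJ, if_neg (by omega), sum_add_sum_compl]
  have hS : ∑ x ∈ J, ∑ b ∈ Jᶜ, ∑ I ∈ F with x ∈ I ∧ b ∈ I, s I = 4 * ∑ I ∈ F, s I := by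
    rw [sum_sum_sum_filter_mem_and_mem, mul_sum]
    refine sum_congr rfl fun I hI => ?_
    obtain ⟨h4, h2⟩ := (mem_filter.1 hI).2
    have := card_inter_add_card_inter_compl I J
    rw [inter_comm J, inter_comm Jᶜ, h2, show #(I ∩ Jᶜ) = 2 by omega]
    norm_num
  have hsum := sum_nonneg fun x hx => sum_nonneg fun b hb =>
    hF.nonneg_of_mem_of_notMem hJ hx (mem_compl.1 hb)
  rw [sum_congr rfl fun x hx => sum_congr rfl fun b hb => by
    rw [sum_erase_eq_sub hx, sum_erase_eq_sub hb]] at hsum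
  simp only [sum_add_distrib, sum_sub_distrib, ← mul_sum, sum_const, hJ, hK, nsmul_eq_mul] at hsum
  rw [hcJ]
  push_cast at hsum
  linarith
end
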